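/- For any positive vector x satisfying A x ≤ x (entrywise, with (Ax)_i = max_j a_{ij} x_j), where A is nonnegative with Tr(A) ≤ 1, and for positive q and nonzero nonnegative p, one has q^- x x^- p ≥ q^- A* p; i.e., q^- A* p is a lower bound for q^- x x^- p over the constraint set. -/

import Mathlib

/-!
A positive max-times sub-eigenvector `x` (`A ⊗ x ≤ x`) stays one for every power of `A`, hence
for `A*`; entrywise this says `a*_{ij} ≤ x_i / x_j`. Therefore
`q_i⁻¹ a*_{ij} p_j ≤ (x_i / q_i) (p_j / x_j)`, and the right-hand side is at most the product of
the two maxima `q⁻ x` and `x⁻ p`.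
-/

open scoped BigOperators

noncomputable def mtMulMat {n : ℕ} (A B : Matrix (Fin n) (Fin n) ℝ) :
    Matrix (Fin n) (Fin n) ℝ :=
  fun i j => ⨆ k, A i k * B k j

noncomputable def mtMulVec {n : ℕ} (A : Matrix (Fin n) (Fin n) ℝ) (x : Fin n → ℝ) :
    Fin n → ℝ :=
  fun i => ⨆ j, A i j * x j

noncomputable def mtPow {n : ℕ} (A : Matrix (Fin n) (Fin n) ℝ) : ℕ → Matrix (Fin n) (Fin n) ℝ
  | 0 => fun i j => if i = j then 1 else 0
  | m + 1 => mtMulMat (mtPow A m) A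

noncomputable def mtTrace {n : ℕ} (A : Matrix (Fin n) (Fin n) ℝ) : ℝ := ⨆ i, A i i

noncomputable def mtTr {n : ℕ} (A : Matrix (Fin n) (Fin n) ℝ) : ℝ :=
  ⨆ m : Fin n, mtTrace (mtPow A (m.1 + 1))

noncomputable def kleeneStar {n : ℕ} (A : Matrix (Fin n) (Fin n) ℝ) :
    Matrix (Fin n) (Fin n) ℝ :=
  fun i j => ⨆ m : Fin n, mtPow A m.1 i j

noncomputable def cycleMean {n : ℕ} (A : Matrix (Fin n) (Fin n) ℝ) (c : List (Fin n)) : ℝ :=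
  (((c.zip (c.rotate 1)).map (fun p => A p.1 p.2)).prod) ^ ((1 : ℝ) / c.length)

noncomputable def specRad {n : ℕ} (A : Matrix (Fin n) (Fin n) ℝ) : ℝ :=
  sSup {r : ℝ | ∃ c : List (Fin n), c ≠ [] ∧ c.length ≤ n ∧ r = cycleMean A c}

lemma Real.iSup_iSup_le_iSup_mul_iSup {ι κ : Type*} [Finite ι] [Finite κ] {f : ι → κ → ℝ}
    {a : ι → ℝ} {b : κ → ℝ} (ha : 0 ≤ a) (hb : 0 ≤ b) (h : ∀ i j, f i j ≤ a i * b j) :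
    ⨆ i, ⨆ j, f i j ≤ (⨆ i, a i) * (⨆ j, b j) := by
  have hprod : 0 ≤ (⨆ i, a i) * (⨆ j, b j) :=
    mul_nonneg (Real.iSup_nonneg ha) (Real.iSup_nonneg hb)
  refine Real.iSup_le (fun i => Real.iSup_le (fun j => (h i j).trans ?_) hprod) hprod
  exact mul_le_mul (le_ciSup (Finite.bddAbove_range a) i) (le_ciSup (Finite.bddAbove_range b) j)
    (hb j) (Real.iSup_nonneg ha)

section SubEigenvector

variable {n : ℕ} {A : Matrix (Fin n) (Fin n) ℝ}

lemma mtPow_nonneg (hA : ∀ i j, 0 ≤ A i j) (m : ℕ) (i j : Fin n) : 0 ≤ mtPow A m i j := by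
  induction m generalizing j with
  | zero => by_cases h : i = j <;> simp [mtPow, h]
  | succ m ih =>
    exact (mul_nonneg (ih i) (hA i j)).trans
      (le_ciSup (f := fun k => mtPow A m i k * A k j) (Finite.bddAbove_range _) i)

variable {x : Fin n → ℝ}

lemma mul_le_of_mtMulVec_le (hAx : mtMulVec A x ≤ x) (i j : Fin n) : A i j * x j ≤ x i :=
  (le_ciSup (f := fun j => A i j * x j) (Finite.bddAbove_range _) j).trans (hAx i)

lemma mtPow_mul_le (hA : ∀ i j, 0 ≤ A i j) (hx : 0 ≤ x) (hAx : mtMulVec A x ≤ x) (m : ℕ)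
    (i j : Fin n) : mtPow A m i j * x j ≤ x i := by
  induction m generalizing j with
  | zero => by_cases h : i = j <;> simp [mtPow, h, show 0 ≤ x i from hx i]
  | succ m ih =>
    simp only [mtPow, mtMulMat, Real.iSup_mul_of_nonneg (hx j)]
    refine Real.iSup_le (fun k => ?_) (hx i)
    calc mtPow A m i k * A k j * x j = mtPow A m i k * (A k j * x j) := mul_assoc _ _ _
      _ ≤ mtPow A m i k * x k :=
        mul_le_mul_of_nonneg_left (mul_le_of_mtMulVec_le hAx k j) (mtPow_nonneg hA m i k)
      _ ≤ x i := ih k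

lemma kleeneStar_mul_le (hA : ∀ i j, 0 ≤ A i j) (hx : 0 ≤ x) (hAx : mtMulVec A x ≤ x)
    (i j : Fin n) : kleeneStar A i j * x j ≤ x i := by
  simp only [kleeneStar, Real.iSup_mul_of_nonneg (hx j)]
  exact Real.iSup_le (fun m => mtPow_mul_le hA hx hAx m i j) (hx i)

end SubEigenvector

theorem stmt15_general {n : ℕ} (A : Matrix (Fin n) (Fin n) ℝ)
    (hA : ∀ i j, 0 ≤ A i j)
    (p : Fin n → ℝ) (hp : ∀ i, 0 ≤ p i)
    (q : Fin n → ℝ) (hq : ∀ i, 0 < q i)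
    (x : Fin n → ℝ) (hx : ∀ i, 0 < x i)
    (hAx : ∀ i, (⨆ j, A i j * x j) ≤ x i) :
    (⨆ i, ⨆ j, (q i)⁻¹ * kleeneStar A i j * p j) ≤
      (⨆ i, x i / q i) * (⨆ j, p j / x j) := by
  refine Real.iSup_iSup_le_iSup_mul_iSup (fun i => div_nonneg (hx i).le (hq i).le)
    (fun j => div_nonneg (hp j) (hx j).le) (fun i j => ?_)
  have hstar : kleeneStar A i j ≤ x i / x j :=
    (le_div_iff₀ (hx j)).mpr (kleeneStar_mul_le hA (fun k => (hx k).le) hAx i j)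
  calc (q i)⁻¹ * kleeneStar A i j * p j ≤ (q i)⁻¹ * (x i / x j) * p j := by
        gcongr
        · exact hp j
        · exact inv_nonneg.mpr (hq i).le
    _ = x i / q i * (p j / x j) := by field_simp

theorem stmt15 {n : ℕ} (hn : 0 < n) (A : Matrix (Fin n) (Fin n) ℝ)
    (hA : ∀ i j, 0 ≤ A i j) (hTr : mtTr A ≤ 1)
    (p : Fin n → ℝ) (hp : ∀ i, 0 ≤ p i) (hp0 : p ≠ 0)
    (q : Fin n → ℝ) (hq : ∀ i, 0 < q i)
    (x : Fin n → ℝ) (hx : ∀ i, 0 < x i)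
    (hAx : ∀ i, (⨆ j, A i j * x j) ≤ x i) :
    (⨆ i, ⨆ j, (q i)⁻¹ * kleeneStar A i j * p j) ≤
      (⨆ i, x i / q i) * (⨆ j, p j / x j) :=
  stmt15_general A hA p hp q hq x hx hAx
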